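/- arXiv:2204.11645 — 4 statements merged into one kernel-verified Lean document; each statement's English description precedes it below -/
import Mathlib

section
/- Let M be a connected topological space and v, w : M → (Fin 4 → ℝ) continuous maps such that for every p ∈ M the vectors v p and w p are nonzero null vectors that are not proportional to each other (there is no c ∈ ℝ with w p = c • v p). Then the function p ↦ η(v p, w p) is nowhere vanishing and of constant sign: either η(v p, w p) < 0 for all p, or η(v p, w p) > 0 for all p. (The claim in the proof of Theorem 3.1 that g(v,w) is nowhere vanishing and does not change sign on a connected spacetime.) -/
/-- The Minkowski bilinear form on `ℝ⁴`. -/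
noncomputable def eta (v w : Fin 4 → ℝ) : ℝ :=
  -(v 0 * w 0) + v 1 * w 1 + v 2 * w 2 + v 3 * w 3

lemma eta_key (v w : Fin 4 → ℝ) (hvv : eta v v = 0) (hww : eta w w = 0)
    (hv0 : v ≠ 0) (hvw : eta v w = 0) : ∃ c : ℝ, w = c • v := by
  unfold eta at hvv hww hvw
  have hv00 : v 0 ≠ 0 := by
    intro h0
    apply hv0
    have e1 : v 1 = 0 := by nlinarith [sq_nonneg (v 1), sq_nonneg (v 2), sq_nonneg (v 3)]
    have e2 : v 2 = 0 := by nlinarith [sq_nonneg (v 1), sq_nonneg (v 2), sq_nonneg (v 3)]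
    have e3 : v 3 = 0 := by nlinarith [sq_nonneg (v 1), sq_nonneg (v 2), sq_nonneg (v 3)]
    funext i
    simp only [Pi.zero_apply]
    fin_cases i
    · exact h0
    · exact e1
    · exact e2
    · exact e3
  refine ⟨w 0 / v 0, ?_⟩
  have hsum : (v 0 * w 1 - w 0 * v 1)^2 + (v 0 * w 2 - w 0 * v 2)^2
      + (v 0 * w 3 - w 0 * v 3)^2 = 0 := by
    linear_combination (v 0)^2 * hww + (w 0)^2 * hvv - 2 * (v 0) * (w 0) * hvw
  have s1 := sq_nonneg (v 0 * w 1 - w 0 * v 1)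
  have s2 := sq_nonneg (v 0 * w 2 - w 0 * v 2)
  have s3 := sq_nonneg (v 0 * w 3 - w 0 * v 3)
  have h1 : v 0 * w 1 = w 0 * v 1 := by
    have : (v 0 * w 1 - w 0 * v 1)^2 = 0 := le_antisymm (by linarith) s1
    have := pow_eq_zero_iff (n := 2) (by norm_num) |>.mp this
    linarith
  have h2 : v 0 * w 2 = w 0 * v 2 := by
    have : (v 0 * w 2 - w 0 * v 2)^2 = 0 := le_antisymm (by linarith) s2
    have := pow_eq_zero_iff (n := 2) (by norm_num) |>.mp this
    linarith
  have h3 : v 0 * w 3 = w 0 * v 3 := by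
    have : (v 0 * w 3 - w 0 * v 3)^2 = 0 := le_antisymm (by linarith) s3
    have := pow_eq_zero_iff (n := 2) (by norm_num) |>.mp this
    linarith
  funext i
  simp only [Pi.smul_apply, smul_eq_mul]
  fin_cases i
  · show w 0 = w 0 / v 0 * v 0
    field_simp
  · show w 1 = w 0 / v 0 * v 1
    field_simp
    linarith
  · show w 2 = w 0 / v 0 * v 2
    field_simp
    linarith
  · show w 3 = w 0 / v 0 * v 3
    field_simp
    linarith

/-- From the proof of Theorem 3.1: for continuous fields `v`, `w` of nonzero null
vectors on a connected space which are nowhere proportional, the function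
`p ↦ η(v p, w p)` is nowhere vanishing and of constant sign. -/
theorem eta_of_null_fields_constant_sign
    {M : Type*} [TopologicalSpace M] [ConnectedSpace M]
    (v w : M → (Fin 4 → ℝ)) (hv : Continuous v) (hw : Continuous w)
    (hvnull : ∀ p : M, eta (v p) (v p) = 0) (hwnull : ∀ p : M, eta (w p) (w p) = 0)
    (hvne : ∀ p : M, v p ≠ 0) (hwne : ∀ p : M, w p ≠ 0)
    (hprop : ∀ p : M, ¬ ∃ c : ℝ, w p = c • v p) :
    (∀ p : M, eta (v p) (w p) < 0) ∨ (∀ p : M, 0 < eta (v p) (w p)) := by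
  have hfc : Continuous (fun p => eta (v p) (w p)) := by
    have hvi : ∀ i : Fin 4, Continuous fun p => v p i :=
      fun i => (continuous_apply i).comp hv
    have hwi : ∀ i : Fin 4, Continuous fun p => w p i :=
      fun i => (continuous_apply i).comp hw
    unfold eta
    exact ((((hvi 0).mul (hwi 0)).neg.add ((hvi 1).mul (hwi 1))).add
      ((hvi 2).mul (hwi 2))).add ((hvi 3).mul (hwi 3))
  have hne : ∀ p, eta (v p) (w p) ≠ 0 := fun p h =>
    hprop p (eta_key (v p) (w p) (hvnull p) (hwnull p) (hvne p) h)
  by_contra hcon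
  push_neg at hcon
  obtain ⟨⟨p, hp⟩, ⟨q, hq⟩⟩ := hcon
  have hp' : 0 < eta (v p) (w p) := lt_of_le_of_ne hp (Ne.symm (hne p))
  have hq' : eta (v q) (w q) < 0 := lt_of_le_of_ne hq (hne q)
  obtain ⟨r, hr⟩ := intermediate_value_univ q p hfc ⟨le_of_lt hq', le_of_lt hp'⟩
  exact hne r hr
end

section
/- Let R be a commutative ring, M an R-module, g : M →ₗ[R] M →ₗ[R] R a bilinear form, and f₁, f₂, f₃ ∈ Rˣ invertible elements. Define the heap operation {f₁,f₂,f₃} := f₁ * f₂⁻¹ * f₃ on units. Then for all u, v, w ∈ M, {f₁,f₂,f₃} • [u,v,w] = [{f₁,f₂,f₃} • u, {f₁,f₂,f₃}⁻¹ • v, {f₁,f₂,f₃} • w], where [u,v,w] := g(v,w) • u. (Proposition 3.4: the semiheap structure on null vector fields and the heap structure on nowhere vanishing functions satisfy a distribution rule.) -/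
/-- Proposition 3.4: the heap operation `{f₁,f₂,f₃} = f₁ f₂⁻¹ f₃` on units of `R`
distributes over the ternary product `[u,v,w] := g(v,w) • u` on an `R`-module. -/
theorem heap_ternary_distribution {R M : Type*} [CommRing R] [AddCommGroup M]
    [Module R M] (g : M →ₗ[R] M →ₗ[R] R) (f₁ f₂ f₃ : Rˣ) (u v w : M) :
    (f₁ * f₂⁻¹ * f₃) • (g v w • u) =
      g ((f₁ * f₂⁻¹ * f₃)⁻¹ • v) ((f₁ * f₂⁻¹ * f₃) • w) • ((f₁ * f₂⁻¹ * f₃) • u) := by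
  set c := f₁ * f₂⁻¹ * f₃
  have : g (c⁻¹ • v) (c • w) = g v w := by
    simp [Units.smul_def, map_smul, LinearMap.smul_apply, smul_eq_mul,
      Units.inv_mul_cancel_left]
  rw [this, smul_comm]
end

section
/- In Minkowski space ℝ⁴, let u, v, w be nonzero null vectors such that v and w are not proportional (there is no c ∈ ℝ with w = c • v). Then the vector [u,v,w] := η(v,w) • u is again a nonzero null vector. (Corollary 3.1: the split null cone at a point carries the structure of a partial semiheap; in particular it is closed under the partial ternary product.) -/
/-- Corollary 3.1 (fibrewise): the split null cone is closed under the partial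
ternary product `[u,v,w] := η(v,w) • u`, defined when `v` and `w` are not
proportional. -/
theorem split_null_cone_closed_under_ternary (u v w : Fin 4 → ℝ)
    (hu0 : u ≠ 0) (hv0 : v ≠ 0) (hw0 : w ≠ 0)
    (hu : eta u u = 0) (hv : eta v v = 0) (hw : eta w w = 0)
    (hprop : ¬ ∃ c : ℝ, w = c • v) :
    eta (eta v w • u) (eta v w • u) = 0 ∧ eta v w • u ≠ 0 := by
  simp only [eta] at hu hv hw
  have hvt : v 0 ≠ 0 := by
    intro h0
    apply hv0
    have h1 : v 1 = 0 := by nlinarith [sq_nonneg (v 1), sq_nonneg (v 2), sq_nonneg (v 3)]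
    have h2 : v 2 = 0 := by nlinarith [sq_nonneg (v 1), sq_nonneg (v 2), sq_nonneg (v 3)]
    have h3 : v 3 = 0 := by nlinarith [sq_nonneg (v 1), sq_nonneg (v 2), sq_nonneg (v 3)]
    funext i
    fin_cases i
    · show v 0 = 0; exact h0
    · show v 1 = 0; exact h1
    · show v 2 = 0; exact h2
    · show v 3 = 0; exact h3
  have hk : eta v w ≠ 0 := by
    intro hk
    apply hprop
    refine ⟨w 0 / v 0, ?_⟩
    simp only [eta] at hk
    have h1 : (v 0 ^ 2 * w 1 - v 0 * w 0 * v 1) ^ 2 + (v 0 ^ 2 * w 2 - v 0 * w 0 * v 2) ^ 2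
        + (v 0 ^ 2 * w 3 - v 0 * w 0 * v 3) ^ 2 = 0 := by
      linear_combination (v 0)^4 * hw - 2*(v 0)^3 * (w 0) * hk + (v 0)^2*(w 0)^2 * hv
    have e1 : v 0 ^ 2 * w 1 - v 0 * w 0 * v 1 = 0 := by
      have := sq_nonneg (v 0 ^ 2 * w 1 - v 0 * w 0 * v 1)
      have := sq_nonneg (v 0 ^ 2 * w 2 - v 0 * w 0 * v 2)
      have := sq_nonneg (v 0 ^ 2 * w 3 - v 0 * w 0 * v 3)
      have hsq : (v 0 ^ 2 * w 1 - v 0 * w 0 * v 1) ^ 2 = 0 := by linarith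
      exact sq_eq_zero_iff.mp hsq
    have e2 : v 0 ^ 2 * w 2 - v 0 * w 0 * v 2 = 0 := by
      have := sq_nonneg (v 0 ^ 2 * w 1 - v 0 * w 0 * v 1)
      have := sq_nonneg (v 0 ^ 2 * w 2 - v 0 * w 0 * v 2)
      have := sq_nonneg (v 0 ^ 2 * w 3 - v 0 * w 0 * v 3)
      have hsq : (v 0 ^ 2 * w 2 - v 0 * w 0 * v 2) ^ 2 = 0 := by linarith
      exact sq_eq_zero_iff.mp hsq
    have e3 : v 0 ^ 2 * w 3 - v 0 * w 0 * v 3 = 0 := by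
      have := sq_nonneg (v 0 ^ 2 * w 1 - v 0 * w 0 * v 1)
      have := sq_nonneg (v 0 ^ 2 * w 2 - v 0 * w 0 * v 2)
      have := sq_nonneg (v 0 ^ 2 * w 3 - v 0 * w 0 * v 3)
      have hsq : (v 0 ^ 2 * w 3 - v 0 * w 0 * v 3) ^ 2 = 0 := by linarith
      exact sq_eq_zero_iff.mp hsq
    have g1 : w 1 * v 0 = w 0 * v 1 := mul_left_cancel₀ hvt (by linear_combination e1)
    have g2 : w 2 * v 0 = w 0 * v 2 := mul_left_cancel₀ hvt (by linear_combination e2)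
    have g3 : w 3 * v 0 = w 0 * v 3 := mul_left_cancel₀ hvt (by linear_combination e3)
    have f1 : w 1 = w 0 / v 0 * v 1 := by
      rw [div_mul_eq_mul_div, eq_div_iff hvt]; linear_combination g1
    have f2 : w 2 = w 0 / v 0 * v 2 := by
      rw [div_mul_eq_mul_div, eq_div_iff hvt]; linear_combination g2
    have f3 : w 3 = w 0 / v 0 * v 3 := by
      rw [div_mul_eq_mul_div, eq_div_iff hvt]; linear_combination g3
    have f0 : w 0 = w 0 / v 0 * v 0 := by field_simp
    funext i
    fin_cases i
    · show w 0 = ((w 0 / v 0) • v) 0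
      simpa [Pi.smul_apply] using f0
    · show w 1 = ((w 0 / v 0) • v) 1
      simpa [Pi.smul_apply] using f1
    · show w 2 = ((w 0 / v 0) • v) 2
      simpa [Pi.smul_apply] using f2
    · show w 3 = ((w 0 / v 0) • v) 3
      simpa [Pi.smul_apply] using f3
  constructor
  · simp only [eta, Pi.smul_apply, smul_eq_mul]
    linear_combination (-(v 0 * w 0) + v 1 * w 1 + v 2 * w 2 + v 3 * w 3)^2 * hu
  · exact smul_ne_zero hk hu0
end

section
/- Let Λ : ℝ⁴ →ₗ[ℝ] ℝ⁴ be a linear map preserving the Minkowski form, i.e., η(Λ v, Λ w) = η(v, w) for all v, w. Then Λ maps nonzero null vectors to nonzero null vectors, and Λ either preserves or swaps the two components of the split null cone: either (Λ v) 0 > 0 for every nonzero null v with v 0 > 0, or (Λ v) 0 < 0 for every nonzero null v with v 0 > 0. (The fact underlying equation (2.2): Lorentz transformations act consistently on the split null cone, and time-orientation-preserving ones fix each component.) -/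
lemma keyA (a b : Fin 4 → ℝ) (ha : eta a a = 0) (hb : eta b b = 0)
    (hab : eta a b < 0) : 0 < a 0 * b 0 := by
  simp only [eta] at ha hb hab
  nlinarith [sq_nonneg (a 1 * b 2 - a 2 * b 1), sq_nonneg (a 1 * b 3 - a 3 * b 1),
    sq_nonneg (a 2 * b 3 - a 3 * b 2),
    sq_nonneg (a 1 * b 1 + a 2 * b 2 + a 3 * b 3 + a 0 * b 0),
    sq_nonneg (a 1 * b 1 + a 2 * b 2 + a 3 * b 3 - a 0 * b 0)]

/-- A linear map preserving the Minkowski form maps nonzero null vectors to nonzero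
null vectors, and either preserves or swaps the two components of the split null
cone (the fact underlying equation (2.2)). -/
theorem lorentz_acts_on_split_null_cone (Λ : (Fin 4 → ℝ) →ₗ[ℝ] (Fin 4 → ℝ))
    (hΛ : ∀ v w : Fin 4 → ℝ, eta (Λ v) (Λ w) = eta v w) :
    (∀ v : Fin 4 → ℝ, eta v v = 0 → v ≠ 0 → eta (Λ v) (Λ v) = 0 ∧ Λ v ≠ 0) ∧
    ((∀ v : Fin 4 → ℝ, eta v v = 0 → v ≠ 0 → 0 < v 0 → 0 < (Λ v) 0) ∨
     (∀ v : Fin 4 → ℝ, eta v v = 0 → v ≠ 0 → 0 < v 0 → (Λ v) 0 < 0)) := by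
  -- injectivity
  have hinj : ∀ v : Fin 4 → ℝ, Λ v = 0 → v = 0 := by
    intro v hv
    have key : ∀ w : Fin 4 → ℝ, eta v w = 0 := by
      intro w
      have h := hΛ v w
      rw [hv] at h
      simp only [eta, Pi.zero_apply] at h
      simp only [eta]
      linarith
    have h0 := key ![1, 0, 0, 0]
    have h1 := key ![0, 1, 0, 0]
    have h2 := key ![0, 0, 1, 0]
    have h3 := key ![0, 0, 0, 1]
    simp [eta] at h0 h1 h2 h3
    funext i
    fin_cases i <;> simp [h0, h1, h2, h3]
  constructor
  · intro v hv hv0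
    refine ⟨(hΛ v v).trans hv, fun h => hv0 (hinj v h)⟩
  · set e : Fin 4 → ℝ := ![1, 1, 0, 0] with he
    set e' : Fin 4 → ℝ := ![1, -1, 0, 0] with he'
    have hee : eta e e = 0 := by simp [eta, he]
    have he'e' : eta e' e' = 0 := by simp [eta, he']
    have hee' : eta e e' < 0 := by simp [eta, he, he']
    have hΛe : eta (Λ e) (Λ e) = 0 := (hΛ e e).trans hee
    have hΛe' : eta (Λ e') (Λ e') = 0 := (hΛ e' e').trans he'e'
    have hprod : 0 < (Λ e) 0 * (Λ e') 0 :=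
      keyA _ _ hΛe hΛe' ((hΛ e e').symm ▸ hee')
    -- for any null v with v 0 > 0, eta v e < 0 or eta v e' < 0
    have hcases : ∀ v : Fin 4 → ℝ, 0 < v 0 → eta v e < 0 ∨ eta v e' < 0 := by
      intro v hv0
      have h1 : eta v e = -(v 0) + v 1 := by simp [eta, he]
      have h2 : eta v e' = -(v 0) - v 1 := by simp [eta, he']; ring
      by_contra h
      push_neg at h
      obtain ⟨ha, hb⟩ := h
      rw [h1] at ha; rw [h2] at hb
      linarith
    rcases lt_or_ge 0 ((Λ e) 0) with hpos | hle
    · left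
      intro v hv hvne hv0
      have hΛv : eta (Λ v) (Λ v) = 0 := (hΛ v v).trans hv
      have hΛe'0 : 0 < (Λ e') 0 := by nlinarith
      rcases hcases v hv0 with hc | hc
      · have := keyA (Λ v) (Λ e) hΛv hΛe ((hΛ v e).symm ▸ hc)
        nlinarith
      · have := keyA (Λ v) (Λ e') hΛv hΛe' ((hΛ v e').symm ▸ hc)
        nlinarith
    · right
      intro v hv hvne hv0
      have hΛv : eta (Λ v) (Λ v) = 0 := (hΛ v v).trans hv
      have hneg : (Λ e) 0 < 0 := by
        rcases lt_or_eq_of_le hle with h | h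
        · exact h
        · exfalso; rw [h, zero_mul] at hprod; exact lt_irrefl 0 hprod
      have hΛe'0 : (Λ e') 0 < 0 := by nlinarith
      rcases hcases v hv0 with hc | hc
      · have := keyA (Λ v) (Λ e) hΛv hΛe ((hΛ v e).symm ▸ hc)
        nlinarith
      · have := keyA (Λ v) (Λ e') hΛv hΛe' ((hΛ v e').symm ▸ hc)
        nlinarith
end
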